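/- The correlation point P_H (with all single- and two-body correlators zero, <A0B0C1>=<A0B1C0>=<A1B0C0>=-1, <A1B1C1>=1 and the remaining three-body correlators zero) is a convex combination with equal weights 1/8 of exactly 16 of the 64 local deterministic behaviors; hence P_H lies in the no-signaling polytope's affine hull and the dual linear program sum of weights equals 2 under the normalization stated in the paper. -/
import Mathlib


/-- Sign value of a Boolean outcome: `true ↦ +1`, `false ↦ -1`. -/
noncomputable def sgn (b : Bool) : ℝ := if b then 1 else -1

/-- The correlator of a deterministic assignment `d` (party `i`, setting `x` gives
outcome `sgn (d i x)`) at a coordinate `o`, where `none` means the identity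
(no measurement) on that party. This parametrizes all 26 nontrivial correlator
coordinates (plus the trivial all-`none` one). -/
noncomputable def detCorr (d : Fin 3 → Fin 2 → Bool)
    (o : Option (Fin 2) × Option (Fin 2) × Option (Fin 2)) : ℝ :=
  (Option.elim o.1 1 fun x => sgn (d 0 x)) *
  (Option.elim o.2.1 1 fun x => sgn (d 1 x)) *
  (Option.elim o.2.2 1 fun x => sgn (d 2 x))

/-- The tripartite Hardy correlation point `P_H`: all single- and two-body
correlators vanish, `⟨A0B0C1⟩ = ⟨A0B1C0⟩ = ⟨A1B0C0⟩ = -1`, `⟨A1B1C1⟩ = 1`,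
and the remaining three-body correlators vanish. -/
noncomputable def hardyPoint : Option (Fin 2) × Option (Fin 2) × Option (Fin 2) → ℝ :=
  fun o =>
    if o = (some 0, some 0, some 1) then -1
    else if o = (some 0, some 1, some 0) then -1
    else if o = (some 1, some 0, some 0) then -1
    else if o = (some 1, some 1, some 1) then 1
    else 0

/-- Integer sign. -/
def sgnZ (b : Bool) : ℤ := if b then 1 else -1

/-- Integer version of `detCorr`. -/
def detCorrZ (d : Fin 3 → Fin 2 → Bool)
    (o : Option (Fin 2) × Option (Fin 2) × Option (Fin 2)) : ℤ :=
  (Option.elim o.1 1 fun x => sgnZ (d 0 x)) *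
  (Option.elim o.2.1 1 fun x => sgnZ (d 1 x)) *
  (Option.elim o.2.2 1 fun x => sgnZ (d 2 x))

/-- Integer (×8) version of the Hardy point. -/
def hardyPointZ : Option (Fin 2) × Option (Fin 2) × Option (Fin 2) → ℤ :=
  fun o =>
    if o = (some 0, some 0, some 1) then -8
    else if o = (some 0, some 1, some 0) then -8
    else if o = (some 1, some 0, some 0) then -8
    else if o = (some 1, some 1, some 1) then 8
    else 0

/-- The 16 tuples `(a0,a1,b0,b1,c0,c1)` of the deterministic behaviors. -/
def hardyTuples : List (Bool × Bool × Bool × Bool × Bool × Bool) :=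
  [(false, false, true, true, true, true),
   (true, true, true, true, false, true),
   (false, false, false, true, true, false),
   (false, true, false, true, true, false),
   (false, true, true, true, false, true),
   (true, true, true, false, true, false),
   (false, true, true, false, false, false),
   (true, false, false, false, false, true),
   (true, false, false, true, false, false),
   (true, false, true, true, false, false),
   (false, false, false, false, false, true),
   (false, false, true, false, true, true),
   (false, true, false, false, false, false),
   (true, true, false, false, true, true),
   (true, false, true, false, true, false),
   (true, true, false, true, true, true)]

/-- The 16 deterministic behaviors in the decomposition. -/
def hardySet : Finset (Fin 3 → Fin 2 → Bool) :=
  Finset.univ.filter (fun d =>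
    (d 0 0, d 0 1, d 1 0, d 1 1, d 2 0, d 2 1) ∈ hardyTuples)

lemma sgn_cast (b : Bool) : ((sgnZ b : ℤ) : ℝ) = sgn b := by
  cases b <;> simp [sgn, sgnZ]

lemma detCorr_cast (d : Fin 3 → Fin 2 → Bool)
    (o : Option (Fin 2) × Option (Fin 2) × Option (Fin 2)) :
    ((detCorrZ d o : ℤ) : ℝ) = detCorr d o := by
  obtain ⟨a, b, c⟩ := o
  cases a <;> cases b <;> cases c <;>
    simp [detCorr, detCorrZ, sgn_cast]

lemma key : ∀ o : Option (Fin 2) × Option (Fin 2) × Option (Fin 2),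
    o ≠ (none, none, none) →
    (∑ d ∈ hardySet, detCorrZ d o) = hardyPointZ o := by
  decide

lemma card_key : hardySet.card = 16 := by decide

/-- `P_H` is an equal-weight (weight `1/8`) combination of exactly 16 of the 64
local deterministic behaviors; the total weight (the dual linear program value)
equals `2`. -/
theorem hardy_point_dual_decomposition :
    ∃ S : Finset (Fin 3 → Fin 2 → Bool),
      S.card = 16 ∧
      (∀ o : Option (Fin 2) × Option (Fin 2) × Option (Fin 2),
        o ≠ (none, none, none) →
        (1 / 8 : ℝ) * ∑ d ∈ S, detCorr d o = hardyPoint o) ∧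
      (∑ _d ∈ S, (1 / 8 : ℝ)) = 2 := by
  refine ⟨hardySet, card_key, ?_, ?_⟩
  · intro o ho
    have h1 : ∑ d ∈ hardySet, detCorr d o
        = ((∑ d ∈ hardySet, detCorrZ d o : ℤ) : ℝ) := by
      rw [Int.cast_sum]
      exact Finset.sum_congr rfl fun d _ => (detCorr_cast d o).symm
    rw [h1, key o ho]
    obtain ⟨a, b, c⟩ := o
    simp only [hardyPointZ, hardyPoint]
    split_ifs <;> norm_num
  · rw [Finset.sum_const, card_key]
    norm_num
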